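/- arXiv:1510.06136 — 4 statements merged into one kernel-verified Lean document; each statement's English description precedes it below -/
import Mathlib

section
/- For every real α and every a ≠ 0, the triple (a, 0, −a) (structure constants of a metric on E(1,1)) is a fixed point of the RG-2 bracket flow system if and only if αa² = 2; in particular such a steady soliton exists exactly when α > 0, with a = ±√(2/α). -/
noncomputable section

/-- `Q₁ = (a₂−a₃)² − 3a₁² + 2a₁a₂ + 2a₁a₃`. -/
def Q1 (a1 a2 a3 : ℝ) : ℝ := (a2 - a3) ^ 2 - 3 * a1 ^ 2 + 2 * a1 * a2 + 2 * a1 * a3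

/-- `Q₂ = (a₁−a₃)² − 3a₂² + 2a₂a₁ + 2a₂a₃`. -/
def Q2 (a1 a2 a3 : ℝ) : ℝ := (a1 - a3) ^ 2 - 3 * a2 ^ 2 + 2 * a2 * a1 + 2 * a2 * a3

/-- `Q₃ = (a₁−a₂)² − 3a₃² + 2a₃a₁ + 2a₃a₂`. -/
def Q3 (a1 a2 a3 : ℝ) : ℝ := (a1 - a2) ^ 2 - 3 * a3 ^ 2 + 2 * a3 * a1 + 2 * a3 * a2

/-- Right-hand side of the RG-2 bracket flow for `a₁`. -/
def F1 (α a1 a2 a3 : ℝ) : ℝ := (a1 / 2) * Q1 a1 a2 a3 * (1 + (α / 8) * Q1 a1 a2 a3)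

/-- Right-hand side of the RG-2 bracket flow for `a₂`. -/
def F2 (α a1 a2 a3 : ℝ) : ℝ := (a2 / 2) * Q2 a1 a2 a3 * (1 + (α / 8) * Q2 a1 a2 a3)

/-- Right-hand side of the RG-2 bracket flow for `a₃`. -/
def F3 (α a1 a2 a3 : ℝ) : ℝ := (a3 / 2) * Q3 a1 a2 a3 * (1 + (α / 8) * Q3 a1 a2 a3)

/-- A triple of structure constants is a fixed point of the RG-2 bracket flow
(a steady algebraic soliton of the two-loop renormalization group flow). -/
def IsFixedPoint (α a1 a2 a3 : ℝ) : Prop :=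
  F1 α a1 a2 a3 = 0 ∧ F2 α a1 a2 a3 = 0 ∧ F3 α a1 a2 a3 = 0

/-!
On the `E(1,1)` triple `(a, 0, −a)` one has `Q₁ = Q₃ = −4a²`, so `F₁ = −F₃ = a³(αa² − 2)`, while
`F₂` vanishes because of its factor `a₂ = 0`. For `a ≠ 0` the fixed-point equations thus reduce to
the single equation `αa² = 2`, which is solvable with `a ≠ 0` exactly when `α > 0`.
-/

section E11

variable (α a : ℝ)

lemma Q1_E11 : Q1 a 0 (-a) = -4 * a ^ 2 := by
  unfold Q1; ring

lemma Q3_E11 : Q3 a 0 (-a) = -4 * a ^ 2 := by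
  unfold Q3; ring

lemma F1_E11 : F1 α a 0 (-a) = a ^ 3 * (α * a ^ 2 - 2) := by
  rw [F1, Q1_E11]; ring

lemma F2_of_a2_eq_zero (a1 a3 : ℝ) : F2 α a1 0 a3 = 0 := by
  simp [F2]

lemma F3_E11 : F3 α a 0 (-a) = -(a ^ 3 * (α * a ^ 2 - 2)) := by
  rw [F3, Q3_E11]; ring

lemma isFixedPoint_E11_iff (ha : a ≠ 0) :
    IsFixedPoint α a 0 (-a) ↔ α * a ^ 2 = 2 := by
  simp only [IsFixedPoint, F1_E11, F2_of_a2_eq_zero, F3_E11, neg_eq_zero, true_and, and_self,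
    mul_eq_zero, pow_eq_zero_iff three_ne_zero, ha, false_or, sub_eq_zero]

end E11

lemma mul_sq_eq_iff_eq_sqrt_or_eq_neg_sqrt {α c : ℝ} (hα : 0 < α) (hc : 0 ≤ c) (a : ℝ) :
    α * a ^ 2 = c ↔ a = √(c / α) ∨ a = -√(c / α) := by
  rw [← sq_eq_sq_iff_eq_or_eq_neg, Real.sq_sqrt (div_nonneg hc hα.le), eq_div_iff hα.ne', mul_comm]

lemma pos_of_mul_sq_eq {α a c : ℝ} (hc : 0 < c) (h : α * a ^ 2 = c) :
    0 < α :=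
  pos_of_mul_pos_left (h ▸ hc) (sq_nonneg a)

/-- for every `α` and `a ≠ 0`, the triple `(a,0,−a)` on `E(1,1)` is a fixed
point of the RG-2 bracket flow iff `αa² = 2`; in particular such a steady soliton exists
exactly when `α > 0`, with `a = ±√(2/α)`. -/
theorem stmt5 (α : ℝ) :
    (∀ a : ℝ, a ≠ 0 → (IsFixedPoint α a 0 (-a) ↔ α * a ^ 2 = 2)) ∧
    ((∃ a : ℝ, a ≠ 0 ∧ IsFixedPoint α a 0 (-a)) ↔ 0 < α) ∧
    (0 < α → ∀ a : ℝ, a ≠ 0 →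
      (IsFixedPoint α a 0 (-a) ↔
        a = Real.sqrt (2 / α) ∨ a = -Real.sqrt (2 / α))) := by
  have hE11 := isFixedPoint_E11_iff α
  refine ⟨hE11, ⟨?_, fun hα => ?_⟩, fun hα a ha => ?_⟩
  · rintro ⟨a, ha, hfix⟩
    exact pos_of_mul_sq_eq two_pos ((hE11 a ha).1 hfix)
  · have hsqrt : √(2 / α) ≠ 0 := (Real.sqrt_pos.2 (by positivity)).ne'
    refine ⟨√(2 / α), hsqrt, (hE11 _ hsqrt).2 ?_⟩
    exact (mul_sq_eq_iff_eq_sqrt_or_eq_neg_sqrt hα zero_le_two _).2 (Or.inl rfl)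
  · rw [hE11 a ha, mul_sq_eq_iff_eq_sqrt_or_eq_neg_sqrt hα zero_le_two]
end
end

section
/- For every α < 0, the triple (a₁,a₂,a₃) = (3/√(−2α), 3/√(−2α), 4/√(−2α)) (structure constants of a metric on SU(2)) is a fixed point of the RG-2 bracket flow system, i.e. F₁ = F₂ = F₃ = 0 at this triple; explicitly, Q₁ = Q₂ = −8/α and Q₃ = 0 there. -/
noncomputable section

/-!
The `Qᵢ` are quadratic forms, so at `a / s` they equal `Qᵢ(a) / s²`. At `a = (3, 3, 4)` one finds
`Q = (16, 16, 0)`, and with `s² = −2α` this gives `Q₁ = Q₂ = −8/α`, which is exactly the root of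
the two-loop factor `1 + (α/8) Q`; the third equation holds because `Q₃ = 0`.
-/

lemma Q1_div (a1 a2 a3 s : ℝ) : Q1 (a1 / s) (a2 / s) (a3 / s) = Q1 a1 a2 a3 / s ^ 2 := by
  unfold Q1; ring

lemma Q2_div (a1 a2 a3 s : ℝ) : Q2 (a1 / s) (a2 / s) (a3 / s) = Q2 a1 a2 a3 / s ^ 2 := by
  unfold Q2; ring

lemma Q3_div (a1 a2 a3 s : ℝ) : Q3 (a1 / s) (a2 / s) (a3 / s) = Q3 a1 a2 a3 / s ^ 2 := by
  unfold Q3; ring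

lemma Q1_three_three_four : Q1 3 3 4 = 16 := by norm_num [Q1]

lemma Q2_three_three_four : Q2 3 3 4 = 16 := by norm_num [Q2]

lemma Q3_three_three_four : Q3 3 3 4 = 0 := by norm_num [Q3]

lemma mul_one_add_div_eight_mul_eq_zero {α q : ℝ} (hα : α ≠ 0) (hq : q = -8 / α) :
    q * (1 + α / 8 * q) = 0 := by
  subst hq; field_simp; ring

lemma F1_eq_zero_of_Q1_eq {α a1 a2 a3 : ℝ} (hα : α ≠ 0) (h : Q1 a1 a2 a3 = -8 / α) :
    F1 α a1 a2 a3 = 0 := by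
  rw [F1, mul_assoc, mul_one_add_div_eight_mul_eq_zero hα h, mul_zero]

lemma F2_eq_zero_of_Q2_eq {α a1 a2 a3 : ℝ} (hα : α ≠ 0) (h : Q2 a1 a2 a3 = -8 / α) :
    F2 α a1 a2 a3 = 0 := by
  rw [F2, mul_assoc, mul_one_add_div_eight_mul_eq_zero hα h, mul_zero]

lemma F3_eq_zero_of_Q3_eq_zero {α a1 a2 a3 : ℝ} (h : Q3 a1 a2 a3 = 0) : F3 α a1 a2 a3 = 0 := by
  rw [F3, h, mul_zero, zero_mul]

/-- for every `α < 0`, the triple `(3/√(−2α), 3/√(−2α), 4/√(−2α))` on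
`SU(2)` is a fixed point of the RG-2 bracket flow; explicitly `Q₁ = Q₂ = −8/α` and
`Q₃ = 0` there. -/
theorem stmt11 (α : ℝ) (hα : α < 0) :
    IsFixedPoint α (3 / Real.sqrt (-2 * α)) (3 / Real.sqrt (-2 * α))
      (4 / Real.sqrt (-2 * α)) ∧
    Q1 (3 / Real.sqrt (-2 * α)) (3 / Real.sqrt (-2 * α)) (4 / Real.sqrt (-2 * α))
      = -8 / α ∧
    Q2 (3 / Real.sqrt (-2 * α)) (3 / Real.sqrt (-2 * α)) (4 / Real.sqrt (-2 * α))
      = -8 / α ∧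
    Q3 (3 / Real.sqrt (-2 * α)) (3 / Real.sqrt (-2 * α)) (4 / Real.sqrt (-2 * α))
      = 0 := by
  have hα₀ : α ≠ 0 := hα.ne
  have h16 : 16 / Real.sqrt (-2 * α) ^ 2 = -8 / α := by
    rw [Real.sq_sqrt (by linarith)]
    field_simp
    ring
  have hQ1 : Q1 (3 / Real.sqrt (-2 * α)) (3 / Real.sqrt (-2 * α)) (4 / Real.sqrt (-2 * α))
      = -8 / α := by
    rw [Q1_div, Q1_three_three_four, h16]
  have hQ2 : Q2 (3 / Real.sqrt (-2 * α)) (3 / Real.sqrt (-2 * α)) (4 / Real.sqrt (-2 * α))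
      = -8 / α := by
    rw [Q2_div, Q2_three_three_four, h16]
  have hQ3 : Q3 (3 / Real.sqrt (-2 * α)) (3 / Real.sqrt (-2 * α)) (4 / Real.sqrt (-2 * α))
      = 0 := by
    rw [Q3_div, Q3_three_three_four, zero_div]
  exact ⟨⟨F1_eq_zero_of_Q1_eq hα₀ hQ1, F2_eq_zero_of_Q2_eq hα₀ hQ2, F3_eq_zero_of_Q3_eq_zero hQ3⟩,
    hQ1, hQ2, hQ3⟩
end
end

section
/- Classification of steady solitons of the form (a, a, c·a): for every real α, every a ≠ 0 and every c ∈ ℝ, the triple (a, a, c·a) is a fixed point of the RG-2 bracket flow system if and only if c = 0, or (c = 1 and αa² = −8), or (c = 4/3 and 2αa² = −9). -/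
noncomputable section

theorem half_mul_mul_one_add_eq_zero_iff (α x q : ℝ) :
    x / 2 * q * (1 + α / 8 * q) = 0 ↔ x = 0 ∨ q = 0 ∨ α * q = -8 := by
  have h : 1 + α / 8 * q = 0 ↔ α * q = -8 := by constructor <;> intro h <;> linarith
  simp [h, or_assoc]

theorem F1_eq_zero_iff (α a1 a2 a3 : ℝ) :
    F1 α a1 a2 a3 = 0 ↔ a1 = 0 ∨ Q1 a1 a2 a3 = 0 ∨ α * Q1 a1 a2 a3 = -8 :=
  half_mul_mul_one_add_eq_zero_iff ..

theorem F2_eq_zero_iff (α a1 a2 a3 : ℝ) :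
    F2 α a1 a2 a3 = 0 ↔ a2 = 0 ∨ Q2 a1 a2 a3 = 0 ∨ α * Q2 a1 a2 a3 = -8 :=
  half_mul_mul_one_add_eq_zero_iff ..

theorem F3_eq_zero_iff (α a1 a2 a3 : ℝ) :
    F3 α a1 a2 a3 = 0 ↔ a3 = 0 ∨ Q3 a1 a2 a3 = 0 ∨ α * Q3 a1 a2 a3 = -8 :=
  half_mul_mul_one_add_eq_zero_iff ..

theorem Q1_self_self_mul (a c : ℝ) : Q1 a a (c * a) = a ^ 2 * c ^ 2 := by
  unfold Q1; ring

theorem Q2_self_self_mul (a c : ℝ) : Q2 a a (c * a) = a ^ 2 * c ^ 2 := by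
  unfold Q2; ring

theorem Q3_self_self_mul (a c : ℝ) : Q3 a a (c * a) = a ^ 2 * (c * (4 - 3 * c)) := by
  unfold Q3; ring

/-- Here `b` stands for `α a²`. -/
theorem soliton_conditions_iff (b c : ℝ) :
    (c = 0 ∨ b * c ^ 2 = -8) ∧ (c = 0 ∨ c = 4 / 3 ∨ b * (c * (4 - 3 * c)) = -8) ↔
      c = 0 ∨ (c = 1 ∧ b = -8) ∨ (c = 4 / 3 ∧ 2 * b = -9) := by
  constructor
  · rintro ⟨rfl | hQ12, hQ3⟩
    · exact Or.inl rfl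
    right
    rcases hQ3 with rfl | rfl | hQ3
    · norm_num at hQ12
    · exact Or.inr ⟨rfl, by linarith⟩
    have hb : b ≠ 0 := by rintro rfl; norm_num at hQ12
    -- both equations fix `b` times a quadratic in `c`, so the quadratics agree
    have hc : c * (c - 1) = 0 := by
      linear_combination (mul_left_cancel₀ hb (hQ12.trans hQ3.symm)) / 4
    rcases mul_eq_zero.1 hc with rfl | hc1
    · norm_num at hQ12
    · obtain rfl : c = 1 := by linarith
      exact Or.inl ⟨rfl, by linarith⟩
  · rintro (rfl | ⟨rfl, hb⟩ | ⟨rfl, hb⟩)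
    · simp
    · exact ⟨Or.inr (by linarith), Or.inr (Or.inr (by linarith))⟩
    · exact ⟨Or.inr (by linarith), Or.inr (Or.inl rfl)⟩

/-- classification of RG-2 steady solitons of the form `(a, a, c·a)` with
`a ≠ 0`. -/
theorem stmt14 (α a c : ℝ) (ha : a ≠ 0) :
    IsFixedPoint α a a (c * a) ↔
      c = 0 ∨ (c = 1 ∧ α * a ^ 2 = -8) ∨ (c = 4 / 3 ∧ 2 * α * a ^ 2 = -9) := by
  have h43 : 4 - 3 * c = 0 ↔ c = 4 / 3 := by constructor <;> intro h <;> linarith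
  rw [IsFixedPoint, F1_eq_zero_iff, F2_eq_zero_iff, F3_eq_zero_iff, Q1_self_self_mul,
    Q2_self_self_mul, Q3_self_self_mul, and_self_left]
  simp only [ha, mul_eq_zero, pow_eq_zero_iff, h43, ne_eq, OfNat.ofNat_ne_zero,
    not_false_eq_true, false_or, or_false, or_assoc, or_self_left]
  rw [← mul_assoc α, ← mul_assoc α, mul_assoc 2]
  exact soliton_conditions_iff (α * a ^ 2) c
end
end

section
/- Completeness of the fixed-point list for system (7): for every β > 0, a point (m₂,m₃) ∈ ℝ² is a fixed point of system (7) if and only if it is one of the following: (0,0); (0,1); (0,−1); (1,0); (−1,0); (1,1); (0, 1 ± √(1/β)); (1 ± √(1/β), 0); (1, 1 ± √(1+1/β)); (1 ± √(1+1/β), 1); or (½(1−1/β), ½(1−1/β)). -/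
/-!
Swapping the coordinates exchanges `G₂` and `G₃`, so the fixed-point set is symmetric. `G₂`
vanishes iff `m₂ ∈ {0, 1}`, `m₃ = 1 + m₂`, or the bracket `β (1 + m₃ - m₂)(1 - m₂ - m₃)` equals
`1`. On the four lines `m₂, m₃ ∈ {0, 1}` the remaining equation is a polynomial in one variable
whose roots are explicit. Off these lines, `m₃ = 1 + m₂` would force `G₃ = -2 m₂ (1 + m₂) ≠ 0`,
and if both brackets equal `1` their difference `2β (m₃ - m₂)(1 - m₂ - m₃)` vanishes, which
forces the diagonal point `β (1 - 2m) = 1`.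
-/

noncomputable section

/-- Right-hand side of system (7) for `m₂`. -/
def G2 (β m2 m3 : ℝ) : ℝ :=
  m2 * (1 - m2) * (1 + m2 - m3) * (1 - β * (1 + m3 - m2) * (1 - m2 - m3))

/-- Right-hand side of system (7) for `m₃`. -/
def G3 (β m2 m3 : ℝ) : ℝ :=
  m3 * (1 - m3) * (1 + m3 - m2) * (1 - β * (1 + m2 - m3) * (1 - m2 - m3))

/-- A point `(m₂, m₃)` is a fixed point of the planar system (7). -/
def IsFixedPoint7 (β m2 m3 : ℝ) : Prop := G2 β m2 m3 = 0 ∧ G3 β m2 m3 = 0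

lemma sub_sq_eq_iff {x a c : ℝ} (hc : 0 ≤ c) :
    (x - a) ^ 2 = c ↔ x = a + √c ∨ x = a - √c := by
  rw [← Real.sq_sqrt hc, sq_eq_sq_iff_eq_or_eq_neg, sub_eq_iff_eq_add', sub_eq_iff_eq_add',
    ← sub_eq_add_neg, Real.sq_sqrt hc]

lemma mul_one_sub_two_mul_eq_one_iff {β x : ℝ} (hβ : β ≠ 0) :
    β * (1 - 2 * x) = 1 ↔ x = (1 - 1 / β) / 2 := by
  constructor <;> intro h
  · field_simp; linear_combination -h
  · rw [h]; field_simp; ring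

section

variable {β x y : ℝ}

lemma G3_eq_G2_swap : G3 β x y = G2 β y x := by
  unfold G2 G3; ring

lemma G2_zero_left : G2 β 0 y = 0 := by
  simp [G2]

lemma G2_one_left : G2 β 1 y = 0 := by
  simp [G2]

lemma G2_eq_zero_iff :
    G2 β x y = 0 ↔ x = 0 ∨ x = 1 ∨ y = 1 + x ∨ β * (1 + y - x) * (1 - x - y) = 1 := by
  simp only [G2, mul_eq_zero, sub_eq_zero, or_assoc]
  grind

lemma G2_snd_zero_eq_zero_iff (hβ : 0 < β) :
    G2 β x 0 = 0 ↔ x = 0 ∨ x = 1 ∨ x = -1 ∨ x = 1 + √(1 / β) ∨ x = 1 - √(1 / β) := by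
  have bracket : β * (1 + 0 - x) * (1 - x - 0) = 1 ↔ (x - 1) ^ 2 = 1 / β := by
    rw [eq_div_iff hβ.ne']; constructor <;> intro h <;> linear_combination h
  rw [G2_eq_zero_iff, bracket, sub_sq_eq_iff (by positivity)]
  grind

lemma G2_snd_one_eq_zero_iff (hβ : 0 < β) :
    G2 β x 1 = 0 ↔ x = 0 ∨ x = 1 ∨ x = 1 + √(1 + 1 / β) ∨ x = 1 - √(1 + 1 / β) := by
  have bracket : β * (1 + 1 - x) * (1 - x - 1) = 1 ↔ (x - 1) ^ 2 = 1 + 1 / β := by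
    rw [← sub_eq_iff_eq_add', eq_div_iff hβ.ne']
    constructor <;> intro h <;> linear_combination h
  rw [G2_eq_zero_iff, bracket, sub_sq_eq_iff (by positivity)]
  grind

lemma G2_self_eq_zero_of_bracket (h : β * (1 - 2 * x) = 1) : G2 β x x = 0 := by
  unfold G2; linear_combination (-(x * (1 - x))) * h

lemma diagonal_of_brackets_eq_one (h2 : β * (1 + y - x) * (1 - x - y) = 1)
    (h3 : β * (1 + x - y) * (1 - y - x) = 1) :
    β * (1 - 2 * x) = 1 ∧ β * (1 - 2 * y) = 1 := by
  have hdiff : β * (1 - x - y) * (y - x) = 0 := by linear_combination (h2 - h3) / 2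
  have hne : β * (1 - x - y) ≠ 0 := by
    intro h0; rw [mul_right_comm, h0, zero_mul] at h2; norm_num at h2
  obtain rfl : y = x := by linarith [(mul_eq_zero.1 hdiff).resolve_left hne]
  exact ⟨by linear_combination h2, by linear_combination h2⟩

end

lemma isFixedPoint7_iff {β m2 m3 : ℝ} :
    IsFixedPoint7 β m2 m3 ↔
      (m2 = 0 ∧ G2 β m3 0 = 0) ∨ (m2 = 1 ∧ G2 β m3 1 = 0) ∨
      (m3 = 0 ∧ G2 β m2 0 = 0) ∨ (m3 = 1 ∧ G2 β m2 1 = 0) ∨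
      (β * (1 - 2 * m2) = 1 ∧ β * (1 - 2 * m3) = 1) := by
  rw [IsFixedPoint7, G3_eq_G2_swap]
  constructor
  · rintro ⟨h2, h3⟩
    rcases G2_eq_zero_iff.1 h2 with rfl | rfl | hline | hbracket2
    · exact .inl ⟨rfl, h3⟩
    · exact .inr <| .inl ⟨rfl, h3⟩
    · have hm2 : m2 * (1 + m2) = 0 := by
        subst hline; unfold G2 at h3; linear_combination (-1 / 2 : ℝ) * h3
      rcases mul_eq_zero.1 hm2 with rfl | hm2
      · exact .inl ⟨rfl, h3⟩
      · exact .inr <| .inr <| .inl ⟨by linarith, by rwa [hline, hm2] at h2⟩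
    · rcases G2_eq_zero_iff.1 h3 with rfl | rfl | hline | hbracket3
      · exact .inr <| .inr <| .inl ⟨rfl, h2⟩
      · exact .inr <| .inr <| .inr <| .inl ⟨rfl, h2⟩
      · exact absurd hbracket2 (by rw [hline]; ring_nf; norm_num)
      · exact .inr <| .inr <| .inr <| .inr <| diagonal_of_brackets_eq_one hbracket2 hbracket3
  · rintro (⟨rfl, h⟩ | ⟨rfl, h⟩ | ⟨rfl, h⟩ | ⟨rfl, h⟩ | ⟨h2, h3⟩)
    · exact ⟨G2_zero_left, h⟩
    · exact ⟨G2_one_left, h⟩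
    · exact ⟨h, G2_zero_left⟩
    · exact ⟨h, G2_one_left⟩
    · have hβ : β ≠ 0 := left_ne_zero_of_mul_eq_one h2
      obtain rfl : m2 = m3 := by
        rw [mul_one_sub_two_mul_eq_one_iff hβ] at h2 h3; rw [h2, h3]
      exact ⟨G2_self_eq_zero_of_bracket h2, G2_self_eq_zero_of_bracket h2⟩

/-- completeness of the fixed-point list of system (7) for `β > 0`. -/
theorem stmt19 (β : ℝ) (hβ : 0 < β) (m2 m3 : ℝ) :
    IsFixedPoint7 β m2 m3 ↔
      (m2, m3) = (0, 0) ∨ (m2, m3) = (0, 1) ∨ (m2, m3) = (0, -1) ∨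
      (m2, m3) = (1, 0) ∨ (m2, m3) = (-1, 0) ∨ (m2, m3) = (1, 1) ∨
      (m2, m3) = (0, 1 + Real.sqrt (1 / β)) ∨ (m2, m3) = (0, 1 - Real.sqrt (1 / β)) ∨
      (m2, m3) = (1 + Real.sqrt (1 / β), 0) ∨ (m2, m3) = (1 - Real.sqrt (1 / β), 0) ∨
      (m2, m3) = (1, 1 + Real.sqrt (1 + 1 / β)) ∨
      (m2, m3) = (1, 1 - Real.sqrt (1 + 1 / β)) ∨
      (m2, m3) = (1 + Real.sqrt (1 + 1 / β), 1) ∨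
      (m2, m3) = (1 - Real.sqrt (1 + 1 / β), 1) ∨
      (m2, m3) = ((1 - 1 / β) / 2, (1 - 1 / β) / 2) := by
  simp only [isFixedPoint7_iff, G2_snd_zero_eq_zero_iff hβ, G2_snd_one_eq_zero_iff hβ,
    mul_one_sub_two_mul_eq_one_iff hβ.ne', Prod.mk.injEq]
  aesop
end
end
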